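/- arXiv:1012.0538 — 4 statements merged into one kernel-verified Lean document; each statement's English description precedes it below -/
import Mathlib

section
/- Fix r ≥ 1, a subset S ⊆ {1,…,r} and a subset N ⊆ {0,1,…,r}. For λ ∈ ℤʳ adopt the convention λ₀ = λ_{r+1} = 0. Then the following are equivalent: (i) there exists λ ∈ ℤʳ with ∑_{i=1}^r λ_i < 0 such that for every i ∈ {1,…,r} with λ_i > 0 one has i ∈ S, and for every j ∈ {0,…,r} with λ_j + λ_{j+1} < 0 one has j ∈ N; (ii) there exist integers μ ≥ 1 and ν with 0 ≤ ν ≤ r − 2μ + 1 such that ν ∈ N, ν + 2μ − 1 ∈ N, and ν + 2i ∈ S for every i with 1 ≤ i ≤ μ − 1. -/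
/-!
(ii) ⇒ (i): the vector `λ = -1, +1, …, +1, -1` supported on `ν + 1, …, ν + 2μ - 1` has sum `-1`,
is positive exactly at the `ν + 2i`, and `λ_j + λ_{j+1} < 0` exactly for `j = ν, ν + 2μ - 1`.

(i) ⇒ (ii): call `j` a node if `λ_j + λ_{j+1} < 0`, and `b` a chain end if `b = ν + 2k + 1` for a
node `ν` with `λ` positive at `ν + 2, …, ν + 2k`; a chain end which is a node is a locus `V_{μ,ν}`.
If no chain end is a node, a downward induction on `c` shows that the tail sums
`T c = ∑_{i ≥ c} λ_i` satisfy `T (c + 1) + max λ_c 0 ≥ 0`, and `T b ≥ 0` at every chain end `b`.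
For `c = 0` this says `∑ λ_i ≥ 0`.
-/

open Finset

theorem sum_Ico_eq_add_sum_Ico_succ_of_eventually_zero {M : Type*} [AddCommMonoid M]
    {f : ℕ → M} {n : ℕ} (hf : ∀ i, n ≤ i → f i = 0) (c : ℕ) :
    ∑ i ∈ Ico c n, f i = f c + ∑ i ∈ Ico (c + 1) n, f i := by
  rcases lt_or_ge c n with hc | hc
  · exact sum_eq_sum_Ico_succ_bot hc f
  · simp [hf c hc, Ico_eq_empty_of_le hc, Ico_eq_empty_of_le (hc.trans c.le_succ)]

inductive IsChainEnd (lam : ℕ → ℤ) : ℕ → Prop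
  | start {a : ℕ} : lam a + lam (a + 1) < 0 → IsChainEnd lam (a + 1)
  | extend {b : ℕ} : IsChainEnd lam b → 0 < lam (b + 1) → IsChainEnd lam (b + 2)

namespace IsChainEnd

variable {lam : ℕ → ℤ}

theorem exists_start {b : ℕ} (h : IsChainEnd lam b) :
    ∃ ν k, b = ν + 2 * k + 1 ∧ lam ν + lam (ν + 1) < 0 ∧
      ∀ i, 1 ≤ i → i ≤ k → 0 < lam (ν + 2 * i) := by
  induction h with
  | start h => exact ⟨_, 0, rfl, h, fun _ _ _ => by omega⟩
  | extend _ hpos ih =>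
    obtain ⟨ν, k, rfl, hν, hk⟩ := ih
    refine ⟨ν, k + 1, by ring, hν, fun i h1 h2 => ?_⟩
    rcases (show i ≤ k ∨ i = k + 1 by omega) with hi | rfl
    · exact hk i h1 hi
    · convert hpos using 2; ring

variable {n : ℕ}

theorem suffix_sum_nonneg (hlam : ∀ i, n ≤ i → lam i = 0)
    (hfree : ∀ b, IsChainEnd lam b → 0 ≤ lam b + lam (b + 1)) (c : ℕ) :
    0 ≤ ∑ i ∈ Ico (c + 1) n, lam i + max (lam c) 0 ∧
      (IsChainEnd lam c → 0 ≤ ∑ i ∈ Ico c n, lam i) := by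
  induction hm : n - c using Nat.strong_induction_on generalizing c with
  | _ m ih =>
  have hT := sum_Ico_eq_add_sum_Ico_succ_of_eventually_zero hlam
  rcases le_or_gt n c with hc | hc
  · simp [hlam c hc, Ico_eq_empty_of_le hc, Ico_eq_empty_of_le (hc.trans c.le_succ)]
  obtain ⟨hU₁, hR₁⟩ := ih (n - (c + 1)) (by omega) (c + 1) rfl
  obtain ⟨-, hR₂⟩ := ih (n - (c + 1 + 1)) (by omega) (c + 1 + 1) rfl
  have hT₀ := hT c
  have hT₁ := hT (c + 1)
  refine ⟨?_, fun hc => ?_⟩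
  · by_cases hnode : lam c + lam (c + 1) < 0
    · linarith [hR₁ (start hnode), le_max_right (lam c) 0]
    · rcases le_total (lam (c + 1)) 0 with hneg | hpos
      · linarith [le_max_left (lam c) 0, max_eq_right hneg]
      · linarith [le_max_right (lam c) 0, max_eq_left hpos]
  · have hpair := hfree c hc
    rcases le_or_gt (lam (c + 1)) 0 with hneg | hpos
    · linarith [max_eq_right hneg]
    · linarith [hR₂ (hc.extend hpos)]

theorem exists_node_of_sum_neg (hlam : ∀ i, n ≤ i → lam i = 0) (h0 : lam 0 = 0)
    (hsum : ∑ i ∈ Ico 1 n, lam i < 0) : ∃ b, IsChainEnd lam b ∧ lam b + lam (b + 1) < 0 := by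
  by_contra! hfree
  have := (suffix_sum_nonneg hlam hfree 0).1
  rw [h0, max_self, add_zero] at this
  exact this.not_gt hsum

end IsChainEnd

theorem lt_of_add_succ_neg {lam : ℕ → ℤ} {n j : ℕ} (hlam : ∀ i, n ≤ i → lam i = 0)
    (h : lam j + lam (j + 1) < 0) : j < n := by
  by_contra! hj
  rw [hlam j hj, hlam (j + 1) (by omega), add_zero] at h
  exact h.false

def alternatingChain (ν k t : ℕ) : ℤ :=
  if ν < t ∧ t ≤ ν + 2 * k + 1 then (-1) ^ (t - ν) else 0

theorem sum_Ioc_neg_one_pow_sub (a k : ℕ) :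
    ∑ t ∈ Ioc a (a + 2 * k + 1), (-1 : ℤ) ^ (t - a) = -1 := by
  induction k with
  | zero => simp
  | succ k ih =>
    rw [show a + 2 * (k + 1) + 1 = a + 2 * k + 1 + 1 + 1 by ring,
      sum_Ioc_succ_top (by omega), sum_Ioc_succ_top (by omega), ih,
      show a + 2 * k + 1 + 1 + 1 - a = 2 * k + 2 + 1 by omega,
      show a + 2 * k + 1 + 1 - a = 2 * k + 2 by omega]
    simp [pow_succ, pow_mul]

theorem sum_alternatingChain {ν k r : ℕ} (h : ν + 2 * k + 1 ≤ r) :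
    ∑ t ∈ Icc 1 r, alternatingChain ν k t = -1 := by
  have hsupp :
      (Icc 1 r).filter (fun t => ν < t ∧ t ≤ ν + 2 * k + 1) = Ioc ν (ν + 2 * k + 1) := by
    ext t
    simp only [mem_filter, mem_Icc, mem_Ioc]
    omega
  rw [← sum_Ioc_neg_one_pow_sub ν k, ← hsupp, sum_filter]
  rfl

theorem alternatingChain_eq_zero_of_lt {ν k t : ℕ} (h : ν + 2 * k + 1 < t) :
    alternatingChain ν k t = 0 :=
  if_neg (by omega)

theorem exists_eq_of_alternatingChain_pos {ν k t : ℕ} (h : 0 < alternatingChain ν k t) :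
    ∃ i, 1 ≤ i ∧ i ≤ k ∧ t = ν + 2 * i := by
  unfold alternatingChain at h
  split_ifs at h with ht
  · rcases Nat.even_or_odd (t - ν) with ⟨i, hi⟩ | hodd
    · exact ⟨i, by omega, by omega, by omega⟩
    · rw [hodd.neg_one_pow] at h
      exact absurd h (by norm_num)
  · exact absurd h (lt_irrefl 0)

theorem eq_or_eq_of_alternatingChain_add_succ_neg {ν k j : ℕ}
    (h : alternatingChain ν k j + alternatingChain ν k (j + 1) < 0) :
    j = ν ∨ j = ν + 2 * k + 1 := by
  by_contra! hj
  have : alternatingChain ν k j + alternatingChain ν k (j + 1) = 0 := by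
    unfold alternatingChain
    by_cases hin : ν < j ∧ j < ν + 2 * k + 1
    · rw [if_pos (by omega), if_pos (by omega), show j + 1 - ν = j - ν + 1 by omega, pow_succ]
      ring
    · rw [if_neg (by omega), if_neg (by omega), add_zero]
  exact h.ne this

theorem stmt_5_general (r : ℕ) (S N : Set ℕ) :
    (∃ lam : ℕ → ℤ, lam 0 = 0 ∧ (∀ i, r < i → lam i = 0) ∧
      (∑ i ∈ Finset.Icc 1 r, lam i) < 0 ∧
      (∀ i, 1 ≤ i → i ≤ r → 0 < lam i → i ∈ S) ∧
      (∀ j, j ≤ r → lam j + lam (j + 1) < 0 → j ∈ N)) ↔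
    (∃ μ ν : ℕ, 1 ≤ μ ∧ ν + 2 * μ ≤ r + 1 ∧ ν ∈ N ∧ ν + 2 * μ - 1 ∈ N ∧
      ∀ i, 1 ≤ i → i ≤ μ - 1 → ν + 2 * i ∈ S) := by
  constructor
  · rintro ⟨lam, h0, htop, hsum, hS, hN⟩
    obtain ⟨b, hb, hnode⟩ :=
      IsChainEnd.exists_node_of_sum_neg (n := r + 1) htop h0 (by rwa [Ico_add_one_right_eq_Icc])
    have hbr := lt_of_add_succ_neg (n := r + 1) htop hnode
    obtain ⟨ν, k, rfl, hν, hpos⟩ := hb.exists_start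
    refine ⟨k + 1, ν, by omega, by omega, hN ν (by omega) hν, ?_,
      fun i h1 h2 => hS _ (by omega) (by omega) (hpos i h1 (by omega))⟩
    rw [show ν + 2 * (k + 1) - 1 = ν + 2 * k + 1 by omega]
    exact hN _ (by omega) hnode
  · rintro ⟨μ, ν, hμ, hle, hνN, hendN, hS⟩
    obtain ⟨k, rfl⟩ : ∃ k, μ = k + 1 := ⟨μ - 1, by omega⟩
    refine ⟨alternatingChain ν k, if_neg (by omega),
      fun _ _ => alternatingChain_eq_zero_of_lt (by omega),
      by rw [sum_alternatingChain (by omega)]; norm_num, fun _ _ _ hi => ?_, fun _ _ hj => ?_⟩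
    · obtain ⟨i, h1, h2, rfl⟩ := exists_eq_of_alternatingChain_pos hi
      exact hS i h1 (by omega)
    · rcases eq_or_eq_of_alternatingChain_add_succ_neg hj with rfl | rfl
      · exact hνN
      · rwa [show ν + 2 * (k + 1) - 1 = ν + 2 * k + 1 by omega] at hendN

/-- Hilbert–Mumford combinatorics of the VGIT plus-chamber for a chain of `r` monomial
`H_{m,2}`-curves: condition (i) is the existence of a destabilizing one-parameter
subgroup, condition (ii) is membership in one of the loci `V_{μ,ν}`. The convention
`λ₀ = λ_{r+1} = 0` is encoded by the first two conditions on `lam`. -/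
theorem stmt_5 (r : ℕ) (hr : 1 ≤ r) (S N : Set ℕ)
    (hS : S ⊆ Set.Icc 1 r) (hN : N ⊆ Set.Iic r) :
    (∃ lam : ℕ → ℤ, lam 0 = 0 ∧ (∀ i, r < i → lam i = 0) ∧
      (∑ i ∈ Finset.Icc 1 r, lam i) < 0 ∧
      (∀ i, 1 ≤ i → i ≤ r → 0 < lam i → i ∈ S) ∧
      (∀ j, j ≤ r → lam j + lam (j + 1) < 0 → j ∈ N)) ↔
    (∃ μ ν : ℕ, 1 ≤ μ ∧ ν + 2 * μ ≤ r + 1 ∧ ν ∈ N ∧ ν + 2 * μ - 1 ∈ N ∧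
      ∀ i, 1 ≤ i → i ≤ μ - 1 → ν + 2 * i ∈ S) :=
  stmt_5_general r S N
end

section
/- Let m ≥ 1. The kernel of the ℂ-algebra homomorphism φ : ℂ[x,y] → ℂ[t] × ℂ[u] determined by φ(x) = (t, u) and φ(y) = (t^{m+1}, −u^{m+1}) is the principal ideal generated by y² − x^{2m+2}. -/
/-! Identify `ℂ[x,y]` with `ℂ[x][y]` and divide by the monic polynomial `y² − f²`,
`f = x^{m+1}`. The remainder has `y`-degree less than two and vanishes at the two distinct
points `y = f` and `y = −f` of the domain `ℂ[x]`, so it is zero. -/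

open Polynomial

theorem Polynomial.ker_aeval_prod_neg {S : Type*} [CommRing S] [IsDomain S] (h2 : (2 : S) ≠ 0)
    {f : S} (hf : f ≠ 0) :
    RingHom.ker (aeval ((f, -f) : S × S)) = Ideal.span {X ^ 2 - C (f ^ 2)} := by
  classical
  set g : S[X] := X ^ 2 - C (f ^ 2)
  have hmonic : g.Monic := monic_X_pow_sub_C _ two_ne_zero
  have hdeg : g.natDegree = 2 := natDegree_X_pow_sub_C
  have hg : aeval ((f, -f) : S × S) g = 0 := by simp [g, aeval_prod_apply]
  refine le_antisymm (fun p hp => ?_) (Ideal.span_le.2 (by simpa using hg))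
  rw [Ideal.mem_span_singleton, ← modByMonic_eq_zero_iff_dvd hmonic]
  have hrem : aeval ((f, -f) : S × S) (p %ₘ g) = 0 := by
    rw [modByMonic_eq_sub_mul_div p g, map_sub, map_mul, hp, hg, zero_mul, sub_zero]
  rw [aeval_prod_apply, Prod.mk_eq_zero] at hrem
  have hne : f ≠ -f := fun h => hf <| (mul_eq_zero.1 (by linear_combination h)).resolve_left h2
  refine eq_zero_of_natDegree_lt_card_of_eval_eq_zero' _ {f, -f} ?_ ?_
  · simpa [← coe_aeval_eq_eval] using hrem
  · rw [Finset.card_pair hne, ← hdeg]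
    exact natDegree_modByMonic_lt p hmonic fun h => by simp [h] at hdeg

theorem Polynomial.Bivariate.ker_aeval_prod_neg {R : Type*} [CommRing R] [IsDomain R]
    (h2 : (2 : R) ≠ 0) {f : R[X]} (hf : f ≠ 0) :
    RingHom.ker (MvPolynomial.aeval ![((X, X) : R[X] × R[X]), (f, -f)]) =
      Ideal.span
        {(MvPolynomial.X 1 : MvPolynomial (Fin 2) R) ^ 2 - aeval (MvPolynomial.X 0) f ^ 2} := by
  let e := equivMvPolynomial R
  have he_C (q : R[X]) : e (C q) = aeval (MvPolynomial.X 0) q := by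
    induction q using Polynomial.induction_on' <;> simp_all [e, ← C_mul_X_pow_eq_monomial]
  have haeval_eq_comp : MvPolynomial.aeval ![((X, X) : R[X] × R[X]), (f, -f)] =
      ((aeval ((f, -f) : R[X] × R[X])).restrictScalars R).comp
        (e.symm : MvPolynomial (Fin 2) R →ₐ[R] R[X][X]) := by
    ext i : 1
    fin_cases i <;> simp [e]
  have h2' : (2 : R[X]) ≠ 0 := by simpa [← C_ofNat] using h2
  rw [haeval_eq_comp]
  calc _ = Ideal.comap (e.symm : MvPolynomial (Fin 2) R ≃+* R[X][X])
          (RingHom.ker (aeval ((f, -f) : R[X] × R[X]))) := rfl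
    _ = Ideal.map (e : R[X][X] ≃+* MvPolynomial (Fin 2) R) (Ideal.span {X ^ 2 - C (f ^ 2)}) := by
      rw [Polynomial.ker_aeval_prod_neg h2' hf]
      exact Ideal.comap_symm _
    _ = _ := by
      rw [Ideal.map_span, Set.image_singleton]
      simp [e, he_C]

theorem stmt_12_general (m : ℕ) :
    RingHom.ker
        (MvPolynomial.aeval
          ![((Polynomial.X, Polynomial.X) : Polynomial ℂ × Polynomial ℂ),
            ((Polynomial.X : Polynomial ℂ) ^ (m + 1), -(Polynomial.X : Polynomial ℂ) ^ (m + 1))] :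
          MvPolynomial (Fin 2) ℂ →ₐ[ℂ] Polynomial ℂ × Polynomial ℂ) =
      Ideal.span
        {(MvPolynomial.X 1 : MvPolynomial (Fin 2) ℂ) ^ 2 - MvPolynomial.X 0 ^ (2 * m + 2)} := by
  rw [Bivariate.ker_aeval_prod_neg two_ne_zero (pow_ne_zero _ X_ne_zero), map_pow, aeval_X,
    ← pow_mul, show (m + 1) * 2 = 2 * m + 2 by ring]

/-- The kernel of `ℂ[x,y] → ℂ[t] × ℂ[u]`, `x ↦ (t,u)`, `y ↦ (t^{m+1}, −u^{m+1})`, is the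
principal ideal generated by `y² − x^{2m+2}`. -/
theorem stmt_12 (m : ℕ) (hm : 1 ≤ m) :
    RingHom.ker
        (MvPolynomial.aeval
          ![((Polynomial.X, Polynomial.X) : Polynomial ℂ × Polynomial ℂ),
            ((Polynomial.X : Polynomial ℂ) ^ (m + 1), -(Polynomial.X : Polynomial ℂ) ^ (m + 1))] :
          MvPolynomial (Fin 2) ℂ →ₐ[ℂ] Polynomial ℂ × Polynomial ℂ) =
      Ideal.span
        {(MvPolynomial.X 1 : MvPolynomial (Fin 2) ℂ) ^ 2 - MvPolynomial.X 0 ^ (2 * m + 2)} :=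
  stmt_12_general m
end

section
/- Let m ≥ 1 and let B ⊆ ℂ[t] × ℂ[u] be the ℂ-subalgebra generated by (t, u) and (t^{m+1}, −u^{m+1}). Then the quotient ℂ-vector space (ℂ[t] × ℂ[u])/B has dimension m + 1. -/
/-!
Two polynomials `(p, q)` lie in the subalgebra generated by `(t, u)` and `(t^n, -u^n)` exactly
when `p ≡ q` modulo `X^n`: the first generator makes every diagonal pair `(r, r)` available, and
since `2` is invertible, `(t, u)^n` and `(t^n, -u^n)` combine to `(t^n, 0)`, so the subalgebra
contains `X^n ℂ[t] × 0`. Hence `(p, q) ↦ p - q mod X^n` identifies the quotient with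
`ℂ[X]/(X^n)`, which has dimension `n`.
-/

open Polynomial

noncomputable def gluingSubalgebra (R : Type*) [CommRing R] (n : ℕ) : Subalgebra R (R[X] × R[X]) :=
  Algebra.adjoin R {(X, X), (X ^ n, -X ^ n)}

section CommRing

variable {R : Type*} [CommRing R] (n : ℕ)

theorem diag_mem_gluingSubalgebra (r : R[X]) : (r, r) ∈ gluingSubalgebra R n := by
  have hr : ((r, r) : R[X] × R[X]) = aeval ((X, X) : R[X] × R[X]) r := by
    simp [aeval_prod]
  rw [hr]
  exact Algebra.adjoin_mono (by simp) (aeval_mem_adjoin_singleton R _)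

theorem X_pow_mul_mem_gluingSubalgebra (h2 : IsUnit (2 : R)) (a : R[X]) :
    (X ^ n * a, 0) ∈ gluingSubalgebra R n := by
  have hX : ((X, X) : R[X] × R[X]) ∈ gluingSubalgebra R n := Algebra.subset_adjoin (by simp)
  have hXn : ((X ^ n, -X ^ n) : R[X] × R[X]) ∈ gluingSubalgebra R n :=
    Algebra.subset_adjoin (by simp)
  have hinv : C (↑h2.unit⁻¹ : R) * 2 = 1 := by
    rw [← C_ofNat, ← C_mul, IsUnit.val_inv_mul, C_1]
  have key : ((X ^ n * a, 0) : R[X] × R[X]) =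
      (↑h2.unit⁻¹ : R) • ((((X, X) : R[X] × R[X]) ^ n + (X ^ n, -X ^ n)) * (a, a)) := by
    refine Prod.ext ?_ ?_ <;> simp only [Prod.pow_fst, Prod.pow_snd, Prod.fst_mul, Prod.snd_mul,
      Prod.fst_add, Prod.snd_add, Prod.smul_fst, Prod.smul_snd, smul_eq_C_mul]
    · linear_combination (-(X ^ n * a)) * hinv
    · ring
  rw [key]
  exact Subalgebra.smul_mem _
    (mul_mem (add_mem (pow_mem hX n) hXn) (diag_mem_gluingSubalgebra n a)) _

theorem mem_gluingSubalgebra_iff (h2 : IsUnit (2 : R)) {x : R[X] × R[X]} :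
    x ∈ gluingSubalgebra R n ↔ X ^ n ∣ x.1 - x.2 := by
  constructor
  · intro hx
    let f : R[X] × R[X] →ₐ[R] AdjoinRoot (X ^ n : R[X]) :=
      (AdjoinRoot.mkₐ _).comp (AlgHom.fst R _ _)
    let g : R[X] × R[X] →ₐ[R] AdjoinRoot (X ^ n : R[X]) :=
      (AdjoinRoot.mkₐ _).comp (AlgHom.snd R _ _)
    have hle : gluingSubalgebra R n ≤ AlgHom.equalizer f g := by
      refine Algebra.adjoin_le ?_
      rintro _ (rfl | rfl) <;>
        simp [f, g]
    have hfg : AdjoinRoot.mk (X ^ n) x.1 = AdjoinRoot.mk (X ^ n) x.2 := hle hx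
    rwa [← sub_eq_zero, ← map_sub, AdjoinRoot.mk_eq_zero] at hfg
  · rintro ⟨a, ha⟩
    have hx : x = (x.2, x.2) + (X ^ n * a, 0) := by
      ext <;> simp [← ha]
    rw [hx]
    exact add_mem (diag_mem_gluingSubalgebra n _) (X_pow_mul_mem_gluingSubalgebra n h2 a)

noncomputable def gluingDifference : R[X] × R[X] →ₗ[R] AdjoinRoot (X ^ n : R[X]) :=
  (AdjoinRoot.mkₐ _).toLinearMap ∘ₗ (LinearMap.fst R _ _ - LinearMap.snd R _ _)

theorem gluingDifference_apply (x : R[X] × R[X]) :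
    gluingDifference n x = AdjoinRoot.mk _ (x.1 - x.2) := rfl

theorem ker_gluingDifference (h2 : IsUnit (2 : R)) :
    LinearMap.ker (gluingDifference n) = Subalgebra.toSubmodule (gluingSubalgebra R n) := by
  ext x
  rw [LinearMap.mem_ker, gluingDifference_apply, AdjoinRoot.mk_eq_zero,
    Subalgebra.mem_toSubmodule, mem_gluingSubalgebra_iff n h2]

theorem gluingDifference_surjective : Function.Surjective (gluingDifference (R := R) n) := by
  intro y
  obtain ⟨p, rfl⟩ := AdjoinRoot.mk_surjective y
  exact ⟨(p, 0), by simp [gluingDifference_apply]⟩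

end CommRing

theorem finrank_quotient_gluingSubalgebra {K : Type*} [Field K] (h2 : (2 : K) ≠ 0) (n : ℕ) :
    Module.finrank K ((K[X] × K[X]) ⧸ Subalgebra.toSubmodule (gluingSubalgebra K n)) = n := by
  rw [← ker_gluingDifference n h2.isUnit]
  calc _ = Module.finrank K (AdjoinRoot (X ^ n : K[X])) :=
        ((gluingDifference n).quotKerEquivOfSurjective (gluingDifference_surjective n)).finrank_eq
    _ = n := by simp [(AdjoinRoot.powerBasis' (monic_X_pow n)).finrank]

theorem stmt_14_general (m : ℕ)
    (B : Subalgebra ℂ (Polynomial ℂ × Polynomial ℂ))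
    (hB : B = Algebra.adjoin ℂ
      {((Polynomial.X, Polynomial.X) : Polynomial ℂ × Polynomial ℂ),
        ((Polynomial.X : Polynomial ℂ) ^ (m + 1), -(Polynomial.X : Polynomial ℂ) ^ (m + 1))}) :
    Module.finrank ℂ ((Polynomial ℂ × Polynomial ℂ) ⧸ Subalgebra.toSubmodule B) = m + 1 := by
  subst hB
  exact finrank_quotient_gluingSubalgebra two_ne_zero (m + 1)

/-- The δ-invariant of the `A_{2m+1}`-singularity: the quotient of `ℂ[t] × ℂ[u]` by the
subalgebra generated by `(t,u)` and `(t^{m+1}, −u^{m+1})` has dimension `m + 1`. -/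
theorem stmt_14 (m : ℕ) (hm : 1 ≤ m)
    (B : Subalgebra ℂ (Polynomial ℂ × Polynomial ℂ))
    (hB : B = Algebra.adjoin ℂ
      {((Polynomial.X, Polynomial.X) : Polynomial ℂ × Polynomial ℂ),
        ((Polynomial.X : Polynomial ℂ) ^ (m + 1), -(Polynomial.X : Polynomial ℂ) ^ (m + 1))}) :
    Module.finrank ℂ ((Polynomial ℂ × Polynomial ℂ) ⧸ Subalgebra.toSubmodule B) = m + 1 :=
  stmt_14_general m B hB
end

section
/- Let m ≥ 2, a₁,…,a_{m−1} ∈ ℂ, and λ ∈ ℂˣ. Let φ_λ : ℂ[[t]] → ℂ[[t]] be the ℂ-algebra automorphism of the formal power series ring determined by t ↦ λt, and for b = (b₁,…,b_{m−1}) let A(b) ⊆ ℂ[[t]] denote the ℂ-subalgebra generated by t^{2m+1} and t² + ∑_{i=1}^{m−1} b_i t^{2i+1}. Then φ_λ(A(a)) = A(a′), where a′_i = λ^{2i−1} a_i for each i. -/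
/-!
Rescaling `t ↦ λt` is a `ℂ`-algebra automorphism, so it maps the subalgebra generated by two
series onto the subalgebra generated by their images. It sends `t^{2m+1}` to `λ^{2m+1} t^{2m+1}`
and, since `t^{2i+1} = t² · t^{2i-1}`, it sends `t² + ∑ aᵢ t^{2i+1}` to `λ² (t² + ∑ λ^{2i-1} aᵢ t^{2i+1})`.
Multiplying generators by units does not change the subalgebra they generate.
-/

open PowerSeries

lemma Subalgebra.smul_mem_iff_of_isUnit {R A : Type*} [CommSemiring R] [Semiring A] [Algebra R A]
    (S : Subalgebra R A) {r : R} (hr : IsUnit r) {x : A} : r • x ∈ S ↔ x ∈ S :=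
  Submodule.smul_mem_iff_of_isUnit (Subalgebra.toSubmodule S) hr

lemma Algebra.adjoin_smul_pair_of_isUnit {R A : Type*} [CommSemiring R] [Semiring A]
    [Algebra R A] {c d : R} (hc : IsUnit c) (hd : IsUnit d) (x y : A) :
    Algebra.adjoin R {c • x, d • y} = Algebra.adjoin R {x, y} := by
  apply le_antisymm <;> rw [Algebra.adjoin_le_iff, Set.pair_subset_iff]
  · exact ⟨Subalgebra.smul_mem _ (Algebra.subset_adjoin (by simp)) c,
      Subalgebra.smul_mem _ (Algebra.subset_adjoin (by simp)) d⟩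
  · refine ⟨(Subalgebra.smul_mem_iff_of_isUnit _ hc).1 ?_,
      (Subalgebra.smul_mem_iff_of_isUnit _ hd).1 ?_⟩ <;>
    exact Algebra.subset_adjoin (by simp)

namespace PowerSeries

variable {R : Type*} [CommRing R]

lemma image_rescale_adjoin (c : R) (s : Set R⟦X⟧) :
    rescale c '' Algebra.adjoin R s = Algebra.adjoin R (rescale c '' s) := by
  have h : ⇑(rescaleAlgHom c) = ⇑(rescale c) := by rw [← coe_rescaleAlgHom]; rfl
  rw [← h, ← Subalgebra.coe_map, AlgHom.map_adjoin]

lemma rescale_C (c b : R) : rescale c (C b) = C b := by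
  rw [← coe_rescaleAlgHom]
  exact (rescaleAlgHom c).commutes b

lemma rescale_X_pow (c : R) (n : ℕ) : rescale c (X ^ n : R⟦X⟧) = c ^ n • X ^ n := by
  rw [map_pow, rescale_X, mul_pow, ← map_pow, smul_eq_C_mul]

/-- The generator `t² + ∑ bᵢ t^{2i+1}` of the crimping subalgebra `A(b)`. -/
noncomputable def crimpingSeries (m : ℕ) (b : ℕ → R) : R⟦X⟧ :=
  X ^ 2 + ∑ i ∈ Finset.Icc 1 (m - 1), C (b i) * X ^ (2 * i + 1)

lemma rescale_crimpingSeries (c : R) (m : ℕ) (b : ℕ → R) :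
    rescale c (crimpingSeries m b) = c ^ 2 • crimpingSeries m (fun i ↦ c ^ (2 * i - 1) * b i) := by
  simp only [crimpingSeries, map_add, map_sum, map_mul, rescale_X_pow, rescale_C, smul_add,
    Finset.smul_sum]
  congr 1
  refine Finset.sum_congr rfl fun i hi ↦ ?_
  have hweight : 2 * i + 1 = 2 + (2 * i - 1) := by grind
  rw [hweight, pow_add, smul_eq_C_mul, smul_eq_C_mul, map_mul]
  ring

end PowerSeries

theorem stmt_15_general (m : ℕ) (a : ℕ → ℂ) (lam : ℂˣ) :
    (PowerSeries.rescale (lam : ℂ)) ''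
        ((Algebra.adjoin ℂ
          ({(PowerSeries.X : PowerSeries ℂ) ^ (2 * m + 1),
            PowerSeries.X ^ 2 +
              ∑ i ∈ Finset.Icc 1 (m - 1),
                PowerSeries.C (R := ℂ) (a i) * PowerSeries.X ^ (2 * i + 1)} :
            Set (PowerSeries ℂ))) : Set (PowerSeries ℂ)) =
      ((Algebra.adjoin ℂ
        ({(PowerSeries.X : PowerSeries ℂ) ^ (2 * m + 1),
          PowerSeries.X ^ 2 +
            ∑ i ∈ Finset.Icc 1 (m - 1),
              PowerSeries.C (R := ℂ) ((lam : ℂ) ^ (2 * i - 1) * a i) * PowerSeries.X ^ (2 * i + 1)} :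
          Set (PowerSeries ℂ))) : Set (PowerSeries ℂ)) := by
  change rescale (lam : ℂ) '' Algebra.adjoin ℂ {X ^ (2 * m + 1), crimpingSeries m a} =
    Algebra.adjoin ℂ {X ^ (2 * m + 1), crimpingSeries m fun i ↦ (lam : ℂ) ^ (2 * i - 1) * a i}
  rw [image_rescale_adjoin, Set.image_pair, rescale_X_pow, rescale_crimpingSeries,
    Algebra.adjoin_smul_pair_of_isUnit (lam.isUnit.pow _) (lam.isUnit.pow _)]

/-- The `𝔾ₘ`-action on crimping data of `A_{2m}`-singularities: the substitution
`t ↦ λt` carries the subalgebra `A(a) = ℂ[[t^{2m+1}, t² + ∑ aᵢ t^{2i+1}]]` to `A(a′)`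
with `a′ᵢ = λ^{2i−1} aᵢ`. -/
theorem stmt_15 (m : ℕ) (hm : 2 ≤ m) (a : ℕ → ℂ) (lam : ℂˣ) :
    (PowerSeries.rescale (lam : ℂ)) ''
        ((Algebra.adjoin ℂ
          ({(PowerSeries.X : PowerSeries ℂ) ^ (2 * m + 1),
            PowerSeries.X ^ 2 +
              ∑ i ∈ Finset.Icc 1 (m - 1),
                PowerSeries.C (R := ℂ) (a i) * PowerSeries.X ^ (2 * i + 1)} :
            Set (PowerSeries ℂ))) : Set (PowerSeries ℂ)) =
      ((Algebra.adjoin ℂ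
        ({(PowerSeries.X : PowerSeries ℂ) ^ (2 * m + 1),
          PowerSeries.X ^ 2 +
            ∑ i ∈ Finset.Icc 1 (m - 1),
              PowerSeries.C (R := ℂ) ((lam : ℂ) ^ (2 * i - 1) * a i) * PowerSeries.X ^ (2 * i + 1)} :
          Set (PowerSeries ℂ))) : Set (PowerSeries ℂ)) :=
  stmt_15_general m a lam
end
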